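/- (Theorem 2.) Fix data y_1,…,y_n ∈ Y with max_i ‖y_i‖ < r for some r > 0, and suppose Assumptions 1–2 hold. Then the map W ↦ ρ̂_n^W, from (0,∞) to the space of probability measures on Θ, is continuous with respect to the Hellinger distance: for every W > 0, d_H(ρ̂_n^{W'}, ρ̂_n^W) → 0 as W' → W. -/

import Mathlib

open MeasureTheory Real Filter Topology
open scoped ENNReal NNReal

noncomputable section

abbrev Par (p : ℕ) := EuclideanSpace ℝ (Fin p)
abbrev Obs (d : ℕ) := EuclideanSpace ℝ (Fin d)

open scoped Classical in
/-- Kullback–Leibler divergence; `⊤` if `μ` is not absolutely continuous w.r.t. `ν`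
or the log-density is not integrable. -/
noncomputable def klDiv {α : Type*} [MeasurableSpace α] (μ ν : Measure α) : EReal :=
  if μ ≪ ν ∧ Integrable (fun x => Real.log (μ.rnDeriv ν x).toReal) μ
  then ((∫ x, Real.log (μ.rnDeriv ν x).toReal ∂μ : ℝ) : EReal)
  else ⊤

/-- Squared Hellinger distance. -/
noncomputable def hellingerSq {α : Type*} [MeasurableSpace α] (μ ν : Measure α) : ℝ :=
  (1 / 2) * ∫ x, (Real.sqrt ((μ.rnDeriv (μ + ν) x).toReal)
      - Real.sqrt ((ν.rnDeriv (μ + ν) x).toReal)) ^ 2 ∂(μ + ν)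

/-- Empirical risk `R_n`. -/
noncomputable def empRisk {p d n : ℕ} (L : Par p → Obs d → ℝ) (ys : Fin n → Obs d)
    (θ : Par p) : ℝ :=
  (1 / (n : ℝ)) * ∑ i, L θ (ys i)

/-- Partition function `Z_n^W`. -/
noncomputable def partition {p d n : ℕ} (ρ0 : Measure (Par p)) (L : Par p → Obs d → ℝ)
    (ys : Fin n → Obs d) (W : ℝ) : ℝ :=
  ∫ θ, Real.exp (-(n * W) * empRisk L ys θ) ∂ρ0

/-- Gibbs posterior `ρ̂_n^W`. -/
noncomputable def gibbs {p d n : ℕ} (ρ0 : Measure (Par p)) (L : Par p → Obs d → ℝ)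
    (ys : Fin n → Obs d) (W : ℝ) : Measure (Par p) :=
  ρ0.withDensity
    (fun θ => ENNReal.ofReal (Real.exp (-(n * W) * empRisk L ys θ) / partition ρ0 L ys W))

/-- Assumption 1 on the loss. -/
structure Assumption1 {p d : ℕ} (ρ0 : Measure (Par p)) (P : Measure (Obs d))
    (L : Par p → Obs d → ℝ) : Prop where
  measurable : Measurable (Function.uncurry L)
  nonneg : ∀ θ y, 0 ≤ L θ y
  dominated : ∃ K : Par p × Obs d → ℝ, Integrable K (ρ0.prod P) ∧ ∀ θ y, L θ y ≤ K (θ, y)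
  lipschitz_param : ∀ r > 0, ∃ C1 : Obs d → ℝ, (∀ y, 0 ≤ C1 y) ∧ Integrable C1 P ∧
    ∀ θ1 θ2 y, ‖θ1‖ < r → ‖θ2‖ < r → |L θ1 y - L θ2 y| ≤ C1 y * ‖θ1 - θ2‖
  lipschitz_data : ∀ r > 0, ∃ C2 : Par p → ℝ, (∀ θ, 0 ≤ C2 θ) ∧
    Integrable (fun θ => Real.exp (C2 θ)) ρ0 ∧
    ∀ θ y1 y2, ‖y1‖ < r → ‖y2‖ < r → |L θ y1 - L θ y2| ≤ C2 θ * ‖y1 - y2‖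

/-- Assumption 2 on the prior: everywhere-positive, locally log-Lipschitz Lebesgue density. -/
structure Assumption2 {p : ℕ} (ρ0 : Measure (Par p)) (f : Par p → ℝ) : Prop where
  density : ρ0 = volume.withDensity (fun θ => ENNReal.ofReal (f θ))
  pos : ∀ θ, 0 < f θ
  logLip : ∀ r > 0, ∃ C3 : ℝ, ∀ θ1 θ2, ‖θ1‖ < r → ‖θ2‖ < r →
    |Real.log (f θ1) - Real.log (f θ2)| ≤ C3 * ‖θ1 - θ2‖

/-! The Gibbs posterior at inverse temperature `W` is the exponential tilt of the prior by
`-(n W) R_n`. Its density `exp (-(n W) R_n) / Z_n^W` is positive, depends continuously on `W`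
pointwise (the partition function is continuous by dominated convergence, using
`exp (-(n W) R_n) ≤ 1`), and is bounded uniformly for `W'` near `W`. Dominated convergence then
sends the Hellinger integral `½ ∫ (√u_{W'} - √u_W)² dρ₀` to `0`. -/

open Set

lemma sq_sqrt_sub_sqrt_le_add {a b : ℝ} (ha : 0 ≤ a) (hb : 0 ≤ b) :
    (√a - √b) ^ 2 ≤ a + b := by
  nlinarith [Real.sq_sqrt ha, Real.sq_sqrt hb, mul_nonneg (Real.sqrt_nonneg a) (Real.sqrt_nonneg b)]

lemma mul_sq_sqrt_div_sub_sqrt_div {a b : ℝ} (ha : 0 ≤ a) (hb : 0 ≤ b) (hab : 0 < a + b) :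
    (a + b) * (√(a / (a + b)) - √(b / (a + b))) ^ 2 = (√a - √b) ^ 2 := by
  rw [Real.sqrt_div ha, Real.sqrt_div hb, div_sub_div_same, div_pow, Real.sq_sqrt hab.le,
    mul_div_cancel₀ _ hab.ne']

section Hellinger

variable {α : Type*} [MeasurableSpace α] {μ : Measure α}

lemma rnDeriv_withDensity_withDensity [SigmaFinite μ] {a c : α → ℝ≥0∞}
    (ha : Measurable a) (hc : Measurable c) (hc_ne_zero : ∀ x, c x ≠ 0)
    (hc_ne_top : ∀ x, c x ≠ ∞) :
    (μ.withDensity a).rnDeriv (μ.withDensity c) =ᵐ[μ.withDensity c] a / c := by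
  have : SigmaFinite (μ.withDensity c) := SigmaFinite.withDensity_of_ne_top' hc_ne_top
  have ha_eq : μ.withDensity a = (μ.withDensity c).withDensity (a / c) := by
    rw [← withDensity_mul μ hc (ha.div hc)]
    congr 1
    funext x
    exact (ENNReal.mul_div_cancel (hc_ne_zero x) (hc_ne_top x)).symm
  rw [ha_eq]
  exact Measure.rnDeriv_withDensity _ (ha.div hc)

lemma hellingerSq_withDensity_ofReal [SigmaFinite μ] {u v : α → ℝ}
    (hu : Measurable u) (hv : Measurable v) (hu_pos : ∀ x, 0 < u x) (hv_pos : ∀ x, 0 < v x) :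
    hellingerSq (μ.withDensity fun x => ENNReal.ofReal (u x))
        (μ.withDensity fun x => ENNReal.ofReal (v x))
      = 1 / 2 * ∫ x, (√(u x) - √(v x)) ^ 2 ∂μ := by
  have hsum : ∀ x, 0 < u x + v x := fun x => add_pos (hu_pos x) (hv_pos x)
  have hs : Measurable fun x => ENNReal.ofReal (u x + v x) := (hu.add hv).ennreal_ofReal
  have hs_ne_zero : ∀ x, ENNReal.ofReal (u x + v x) ≠ 0 := fun x => by simp [hsum x]
  have hs_ne_top : ∀ x, ENNReal.ofReal (u x + v x) ≠ ∞ := fun x => ENNReal.ofReal_ne_top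
  have hadd : (μ.withDensity fun x => ENNReal.ofReal (u x)) + μ.withDensity
      (fun x => ENNReal.ofReal (v x)) = μ.withDensity fun x => ENNReal.ofReal (u x + v x) := by
    rw [← withDensity_add_left hu.ennreal_ofReal]
    congr 1
    funext x
    exact (ENNReal.ofReal_add (hu_pos x).le (hv_pos x).le).symm
  have hdu := rnDeriv_withDensity_withDensity (μ := μ) hu.ennreal_ofReal hs hs_ne_zero hs_ne_top
  have hdv := rnDeriv_withDensity_withDensity (μ := μ) hv.ennreal_ofReal hs hs_ne_zero hs_ne_top
  unfold hellingerSq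
  rw [hadd, integral_congr_ae (hdu.mp (hdv.mono fun x hx_v hx_u => by rw [hx_u, hx_v])),
    integral_withDensity_eq_integral_toReal_smul hs (ae_of_all _ fun x => (hs_ne_top x).lt_top)]
  congr 1
  refine integral_congr_ae (ae_of_all _ fun x => ?_)
  simp only [Pi.div_apply, smul_eq_mul, ENNReal.toReal_div, ENNReal.toReal_ofReal (hsum x).le,
    ENNReal.toReal_ofReal (hu_pos x).le, ENNReal.toReal_ofReal (hv_pos x).le]
  exact mul_sq_sqrt_div_sub_sqrt_div (hu_pos x).le (hv_pos x).le (hsum x)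

lemma tendsto_hellingerSq_withDensity_ofReal [IsFiniteMeasure μ] {ι : Type*} {l : Filter ι}
    [l.IsCountablyGenerated] {u : ι → α → ℝ} {v : α → ℝ} {C : ℝ}
    (hu : ∀ i, Measurable (u i)) (hv : Measurable v)
    (hu_pos : ∀ᶠ i in l, ∀ x, 0 < u i x) (hv_pos : ∀ x, 0 < v x)
    (hu_le : ∀ᶠ i in l, ∀ x, u i x ≤ C) (hv_le : ∀ x, v x ≤ C)
    (hlim : ∀ x, Tendsto (fun i => u i x) l (𝓝 (v x))) :
    Tendsto (fun i => hellingerSq (μ.withDensity fun x => ENNReal.ofReal (u i x))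
      (μ.withDensity fun x => ENNReal.ofReal (v x))) l (𝓝 0) := by
  have hint : Tendsto (fun i => ∫ x, (√(u i x) - √(v x)) ^ 2 ∂μ) l (𝓝 0) := by
    have hdom := tendsto_integral_filter_of_dominated_convergence (μ := μ) (fun _ => C + C)
      (Eventually.of_forall fun i =>
        (((hu i).sqrt.sub hv.sqrt).pow_const 2).aestronglyMeasurable)
      (by
        filter_upwards [hu_pos, hu_le] with i hi_pos hi_le
        refine ae_of_all _ fun x => ?_
        rw [Real.norm_of_nonneg (sq_nonneg _)]
        exact (sq_sqrt_sub_sqrt_le_add (hi_pos x).le (hv_pos x).le).trans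
          (add_le_add (hi_le x) (hv_le x)))
      (integrable_const _)
      (ae_of_all _ fun x => ((hlim x).sqrt.sub tendsto_const_nhds).pow 2)
    simpa using hdom
  have hhalf := hint.const_mul (1 / 2)
  rw [mul_zero] at hhalf
  refine hhalf.congr' ?_
  filter_upwards [hu_pos] with i hi_pos
  exact (hellingerSq_withDensity_ofReal (hu i) hv hi_pos hv_pos).symm

end Hellinger

section Tilted

variable {α : Type*} [MeasurableSpace α] {μ : Measure α} {R : α → ℝ}

lemma exp_neg_mul_le_one {t r : ℝ} (ht : 0 ≤ t) (hr : 0 ≤ r) : exp (-t * r) ≤ 1 :=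
  exp_le_one_iff.mpr (mul_nonpos_of_nonpos_of_nonneg (neg_nonpos.mpr ht) hr)

variable [IsFiniteMeasure μ]

lemma integrable_exp_neg_mul (hR : Measurable R) (hR_nonneg : 0 ≤ R) {t : ℝ} (ht : 0 ≤ t) :
    Integrable (fun x => exp (-t * R x)) μ :=
  Integrable.of_bound (hR.const_mul (-t)).exp.aestronglyMeasurable 1 (ae_of_all _ fun x => by
    rw [Real.norm_of_nonneg (exp_pos _).le]
    exact exp_neg_mul_le_one ht (hR_nonneg x))

lemma continuousOn_integral_exp_neg_mul (hR : Measurable R) (hR_nonneg : 0 ≤ R) :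
    ContinuousOn (fun t => ∫ x, exp (-t * R x) ∂μ) (Ici 0) :=
  continuousOn_of_dominated (bound := fun _ => 1)
    (fun _ _ => (hR.const_mul _).exp.aestronglyMeasurable)
    (fun t ht => ae_of_all _ fun x => by
      rw [Real.norm_of_nonneg (exp_pos _).le]
      exact exp_neg_mul_le_one ht (hR_nonneg x))
    (integrable_const _)
    (ae_of_all _ fun x => by fun_prop)

lemma tendsto_hellingerSq_tilted_neg_mul [NeZero μ] (hR : Measurable R) (hR_nonneg : 0 ≤ R)
    {t₀ : ℝ} (ht₀ : 0 ≤ t₀) :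
    Tendsto (fun t => hellingerSq (μ.tilted fun x => -t * R x) (μ.tilted fun x => -t₀ * R x))
      (𝓝[Ici 0] t₀) (𝓝 0) := by
  set Z : ℝ → ℝ := fun t => ∫ x, exp (-t * R x) ∂μ
  have hZ_pos : ∀ t, 0 ≤ t → 0 < Z t := fun t ht =>
    integral_exp_pos (integrable_exp_neg_mul hR hR_nonneg ht)
  have hZ_lim : Tendsto Z (𝓝[Ici 0] t₀) (𝓝 (Z t₀)) :=
    continuousOn_integral_exp_neg_mul hR hR_nonneg t₀ ht₀
  have hnonneg : ∀ᶠ t in 𝓝[Ici 0] t₀, 0 ≤ t := self_mem_nhdsWithin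
  have hZ_inv : ∀ᶠ t in 𝓝[Ici 0] t₀, (Z t)⁻¹ ≤ (Z t₀)⁻¹ + 1 :=
    ((hZ_lim.inv₀ (hZ_pos t₀ ht₀).ne').eventually (eventually_le_nhds (lt_add_one _)))
  have hdensity_le : ∀ t, 0 ≤ t → ∀ x, exp (-t * R x) / Z t ≤ (Z t)⁻¹ := fun t ht x => by
    rw [← one_div]
    exact div_le_div_of_nonneg_right (exp_neg_mul_le_one ht (hR_nonneg x)) (hZ_pos t ht).le
  refine tendsto_hellingerSq_withDensity_ofReal (C := (Z t₀)⁻¹ + 1)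
    (fun t => (hR.const_mul _).exp.div_const _) ((hR.const_mul _).exp.div_const _) ?_
    (fun x => div_pos (exp_pos _) (hZ_pos t₀ ht₀)) ?_
    (fun x => (hdensity_le t₀ ht₀ x).trans (le_add_of_nonneg_right zero_le_one)) fun x => ?_
  · filter_upwards [hnonneg] with t ht x
    exact div_pos (exp_pos _) (hZ_pos t ht)
  · filter_upwards [hnonneg, hZ_inv] with t ht hZt x
    exact (hdensity_le t ht x).trans hZt
  · have hexp : Continuous fun t : ℝ => exp (-t * R x) := by fun_prop
    exact hexp.continuousWithinAt.tendsto.div hZ_lim (hZ_pos t₀ ht₀).ne'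

end Tilted

lemma measurable_empRisk {p d n : ℕ} {L : Par p → Obs d → ℝ}
    (hL : Measurable (Function.uncurry L)) (ys : Fin n → Obs d) : Measurable (empRisk L ys) :=
  (Finset.measurable_sum _ fun _ _ => hL.comp (measurable_id.prodMk measurable_const)).const_mul _

lemma empRisk_nonneg {p d n : ℕ} {L : Par p → Obs d → ℝ} (hL : ∀ θ y, 0 ≤ L θ y)
    (ys : Fin n → Obs d) : 0 ≤ empRisk L ys := fun θ =>
  mul_nonneg (by positivity) (Finset.sum_nonneg fun i _ => hL θ (ys i))

lemma gibbs_eq_tilted {p d n : ℕ} (ρ0 : Measure (Par p)) (L : Par p → Obs d → ℝ)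
    (ys : Fin n → Obs d) (W : ℝ) :
    gibbs ρ0 L ys W = ρ0.tilted fun θ => -(n * W) * empRisk L ys θ :=
  rfl

theorem gibbs_continuous_in_W_general
    {p d n : ℕ}
    (ρ0 : Measure (Par p)) (P : Measure (Obs d))
    [IsProbabilityMeasure ρ0]
    (L : Par p → Obs d → ℝ)
    (hL : Assumption1 ρ0 P L)
    (ys : Fin n → Obs d)
    (W : ℝ) (hW : 0 < W) :
    Filter.Tendsto
      (fun W' : ℝ => Real.sqrt (hellingerSq (gibbs ρ0 L ys W') (gibbs ρ0 L ys W)))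
      (nhdsWithin W (Set.Ioi (0 : ℝ))) (nhds 0) := by
  have hscale : Tendsto (fun W' : ℝ => (n : ℝ) * W') (𝓝[Ioi 0] W) (𝓝[Ici 0] (n * W)) :=
    (continuous_const_mul _).continuousWithinAt.tendsto_nhdsWithin fun _ hW' =>
      mem_Ici.mpr (mul_nonneg n.cast_nonneg (le_of_lt hW'))
  have hH := (tendsto_hellingerSq_tilted_neg_mul (μ := ρ0) (measurable_empRisk hL.measurable ys)
    (empRisk_nonneg hL.nonneg ys) (mul_nonneg n.cast_nonneg hW.le)).comp hscale
  simp only [gibbs_eq_tilted]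
  simpa only [Real.sqrt_zero, Function.comp_def] using hH.sqrt

/-- Theorem 2: for fixed data bounded in norm by some `r > 0`, the map
`W ↦ ρ̂_n^W` from `(0,∞)` to probability measures is continuous in the Hellinger distance:
`d_H(ρ̂_n^{W'}, ρ̂_n^W) → 0` as `W' → W` within `(0,∞)`. -/
theorem gibbs_continuous_in_W
    {p d n : ℕ}
    (ρ0 : Measure (Par p)) (P : Measure (Obs d))
    [IsProbabilityMeasure ρ0] [IsProbabilityMeasure P]
    (L : Par p → Obs d → ℝ) (f : Par p → ℝ)
    (hL : Assumption1 ρ0 P L) (hprior : Assumption2 ρ0 f)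
    (r : ℝ) (hr : 0 < r)
    (ys : Fin n → Obs d) (hys : ∀ i, ‖ys i‖ < r)
    (W : ℝ) (hW : 0 < W) :
    Filter.Tendsto
      (fun W' : ℝ => Real.sqrt (hellingerSq (gibbs ρ0 L ys W') (gibbs ρ0 L ys W)))
      (nhdsWithin W (Set.Ioi (0 : ℝ))) (nhds 0) :=
  gibbs_continuous_in_W_general ρ0 P L hL ys W hW
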